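/- arXiv:2211.09106 — 5 statements merged into one kernel-verified Lean document; each statement's English description precedes it below -/
import Mathlib

section
/- Let G = (U, V, E) be a bipartite graph with |U| = |V| = n, each edge colored red or blue. Let L : U ∪ V → {0,1} be a labeling such that |L⁻¹(1)| ≡ n (mod 2). Define E_L as the set of edges (u,v) that are blue with L(u) = L(v), together with edges that are red with L(u) ≠ L(v). Then every perfect matching M of G with an odd number of red edges satisfies |M ∩ E_L| ≥ 1. -/
/-- An edge of the colored bipartite multigraph: left endpoint, right endpoint,
color (`true` = red, `false` = blue). -/
abbrev ColEdge (n : ℕ) := Fin n × Fin n × Bool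

/-- `M` is a perfect matching: every left vertex and every right vertex is covered
by exactly one edge of `M`. -/
def IsPerfectMatching {n : ℕ} (M : Finset (ColEdge n)) : Prop :=
  (∀ u : Fin n, (M.filter (fun e => e.1 = u)).card = 1) ∧
  (∀ v : Fin n, (M.filter (fun e => e.2.1 = v)).card = 1)

/-- The edge `e` violates the labeling `(LU, LV)`: it is blue with equal labels,
or red with different labels. -/
def Violates {n : ℕ} (LU LV : Fin n → Bool) (e : ColEdge n) : Prop :=
  (e.2.2 = false ∧ LU e.1 = LV e.2.1) ∨ (e.2.2 = true ∧ LU e.1 ≠ LV e.2.1)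

instance {n : ℕ} (LU LV : Fin n → Bool) : DecidablePred (Violates LU LV) :=
  fun e => by unfold Violates; infer_instance

lemma fiber_sum {α β G : Type*} [DecidableEq β] [Fintype β] [AddCommMonoid G]
    (s : Finset α) (p : α → β) (h : ∀ b, (s.filter (fun a => p a = b)).card = 1)
    (g : β → G) : ∑ a ∈ s, g (p a) = ∑ b, g b := by
  rw [← Finset.sum_fiberwise_of_maps_to (fun a _ => Finset.mem_univ (p a))]
  refine Finset.sum_congr rfl fun b _ => ?_
  have hc : ∀ a ∈ s.filter (fun a => p a = b), g (p a) = g b := by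
    intro a ha
    rw [Finset.mem_filter] at ha
    rw [ha.2]
  rw [Finset.sum_congr rfl hc, Finset.sum_const, h b, one_smul]

theorem stmt0 {n : ℕ} (E : Finset (ColEdge n)) (LU LV : Fin n → Bool)
    (hL : ((Finset.univ.filter (fun u => LU u = true)).card +
           (Finset.univ.filter (fun v => LV v = true)).card) % 2 = n % 2)
    (M : Finset (ColEdge n)) (hME : M ⊆ E) (hM : IsPerfectMatching M)
    (hodd : Odd (M.filter (fun e => e.2.2 = true)).card) :
    1 ≤ (M.filter (fun e => Violates LU LV e)).card := by
  by_contra h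
  push_neg at h
  have hempty : (M.filter (fun e => Violates LU LV e)).card = 0 := by omega
  have hno : ∀ e ∈ M, ¬ Violates LU LV e := by
    intro e he hv
    have : e ∈ M.filter (fun e => Violates LU LV e) := Finset.mem_filter.mpr ⟨he, hv⟩
    have := Finset.card_pos.mpr ⟨e, this⟩
    omega
  -- the key function
  set f : ColEdge n → ZMod 2 :=
    fun e => (if LU e.1 = true then 1 else 0) + (if LV e.2.1 = true then 1 else 0) with hf
  -- sum of f over M, via fibers
  have h1 : ∑ e ∈ M, ((if LU e.1 = true then 1 else 0) : ZMod 2) =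
      ∑ u : Fin n, (if LU u = true then 1 else 0) :=
    fiber_sum M (fun e => e.1) hM.1 (fun u => if LU u = true then (1:ZMod 2) else 0)
  have h2 : ∑ e ∈ M, ((if LV e.2.1 = true then 1 else 0) : ZMod 2) =
      ∑ v : Fin n, (if LV v = true then 1 else 0) :=
    fiber_sum M (fun e => e.2.1) hM.2 (fun v => if LV v = true then (1:ZMod 2) else 0)
  have hsum1 : ∑ e ∈ M, f e =
      ((Finset.univ.filter (fun u => LU u = true)).card +
       (Finset.univ.filter (fun v => LV v = true)).card : ℕ) := by
    rw [hf, Finset.sum_add_distrib, h1, h2, Finset.sum_boole, Finset.sum_boole]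
    push_cast
    ring
  have hpt : ∀ e ∈ M, f e = (if e.2.2 = false then 1 else 0) := by
    intro e he
    have hv := hno e he
    unfold Violates at hv
    push_neg at hv
    rw [hf]
    rcases Bool.eq_false_or_eq_true e.2.2 with hb | hb
    · -- red
      have heq : LU e.1 = LV e.2.1 := hv.2 hb
      rcases Bool.eq_false_or_eq_true (LU e.1) with h' | h' <;>
        simp [hb, h', heq.symm.trans h']
      decide
    · -- blue
      have hne : LU e.1 ≠ LV e.2.1 := hv.1 hb
      rcases Bool.eq_false_or_eq_true (LU e.1) with h' | h' <;>
        rcases Bool.eq_false_or_eq_true (LV e.2.1) with h'' | h'' <;>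
        simp [hb, h', h''] at hne ⊢
  have hsum2 : ∑ e ∈ M, f e = ((M.filter (fun e => e.2.2 = false)).card : ZMod 2) := by
    rw [Finset.sum_congr rfl hpt, Finset.sum_boole]
  -- card M = n
  have hcard : M.card = n := by
    have := fiber_sum M (fun e => e.1) hM.1 (fun _ => (1 : ℕ))
    simpa using this
  have hsplit : (M.filter (fun e => e.2.2 = false)).card +
      (M.filter (fun e => e.2.2 = true)).card = n := by
    have h' := Finset.card_filter_add_card_filter_not
      (s := M) (p := fun e : ColEdge n => e.2.2 = false)
    have he : M.filter (fun e => ¬ e.2.2 = false) = M.filter (fun e => e.2.2 = true) := by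
      apply Finset.filter_congr
      intro e _
      simp
    rw [he] at h'
    omega
  obtain ⟨k, hk⟩ := hodd
  have hLC : (((Finset.univ.filter (fun u => LU u = true)).card +
       (Finset.univ.filter (fun v => LV v = true)).card : ℕ) : ZMod 2) = (n : ZMod 2) := by
    rw [ZMod.natCast_eq_natCast_iff]
    exact hL
  have hblue : ((M.filter (fun e => e.2.2 = false)).card : ZMod 2) = (n : ZMod 2) := by
    rw [← hsum2, hsum1, hLC]
  have hsplit' : (M.filter (fun e => e.2.2 = false)).card + (2 * k + 1) = n := by omega
  have hcast : ((M.filter (fun e => e.2.2 = false)).card : ZMod 2) + ((2 * k + 1 : ℕ) : ZMod 2)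
      = (n : ZMod 2) := by
    rw [← Nat.cast_add, hsplit']
  rw [hblue] at hcast
  have h21 : ((2 * k + 1 : ℕ) : ZMod 2) = 1 := by
    have : ((2 * k + 1 : ℕ) : ZMod 2) = ((1 : ℕ) : ZMod 2) := by
      rw [ZMod.natCast_eq_natCast_iff]
      unfold Nat.ModEq
      omega
    simpa using this
  rw [h21] at hcast
  nth_rewrite 2 [← add_zero (n : ZMod 2)] at hcast
  exact one_ne_zero (add_left_cancel hcast)
end

section
/- Let S be an l × m matrix with nonnegative real entries, and let W be any real l × m matrix with at least one positive entry. Then the nonnegative rank of S satisfies rank⁺(S) ≥ ⟨W, S⟩ / (‖S‖_∞ · max{⟨W, u v^T⟩ : u ∈ {0,1}^l, v ∈ {0,1}^m}), where ⟨·,·⟩ denotes the Frobenius inner product. -/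
open Finset

/-- The nonnegative rank of a matrix: the least `r` such that `S` is a sum of `r`
entrywise-nonnegative rank-1 matrices. -/
noncomputable def nnegRank {l m : ℕ} (S : Matrix (Fin l) (Fin m) ℝ) : ℕ :=
  sInf {r : ℕ | ∃ (u : Fin r → Fin l → ℝ) (v : Fin r → Fin m → ℝ),
    (∀ t i, 0 ≤ u t i) ∧ (∀ t j, 0 ≤ v t j) ∧
    ∀ i j, S i j = ∑ t, u t i * v t j}

/-- Frobenius inner product of two matrices. -/
def frob {l m : ℕ} (W S : Matrix (Fin l) (Fin m) ℝ) : ℝ :=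
  ∑ i, ∑ j, W i j * S i j

/-- Max of a bilinear form over the unit box is attained at a Boolean point. -/
lemma box_le_bool {l m : ℕ} (W : Matrix (Fin l) (Fin m) ℝ) (Dmax : ℝ)
    (hub : ∀ x ∈ {x : ℝ | ∃ (u : Fin l → Bool) (v : Fin m → Bool),
        x = frob W (fun i j => (if u i then (1:ℝ) else 0) * (if v j then (1:ℝ) else 0))}, x ≤ Dmax)
    (a : Fin l → ℝ) (b : Fin m → ℝ)
    (ha0 : ∀ i, 0 ≤ a i) (ha1 : ∀ i, a i ≤ 1)
    (hb0 : ∀ j, 0 ≤ b j) (hb1 : ∀ j, b j ≤ 1) :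
    ∑ i, ∑ j, W i j * (a i * b j) ≤ Dmax := by
  set c : Fin l → ℝ := fun i => ∑ j, W i j * b j with hc
  set u' : Fin l → Bool := fun i => decide (0 ≤ c i) with hu'
  have step1 : ∑ i, ∑ j, W i j * (a i * b j)
      ≤ ∑ i, (if u' i then (1:ℝ) else 0) * c i := by
    have : ∑ i, ∑ j, W i j * (a i * b j) = ∑ i, a i * c i := by
      refine Finset.sum_congr rfl fun i _ => ?_
      rw [hc, Finset.mul_sum]
      exact Finset.sum_congr rfl fun j _ => by ring
    rw [this]
    refine Finset.sum_le_sum fun i _ => ?_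
    by_cases h : 0 ≤ c i
    · have he : (if u' i then (1:ℝ) else 0) = 1 := by simp [hu', h]
      rw [he]
      nlinarith [ha1 i]
    · have he : (if u' i then (1:ℝ) else 0) = 0 := by simp [hu', h]
      rw [he]
      push_neg at h
      nlinarith [ha0 i]
  set d : Fin m → ℝ := fun j => ∑ i, (if u' i then (1:ℝ) else 0) * W i j with hd
  set v' : Fin m → Bool := fun j => decide (0 ≤ d j) with hv'
  have swap1 : ∑ i, (if u' i then (1:ℝ) else 0) * c i = ∑ j, b j * d j := by
    simp only [hc, hd, Finset.mul_sum]
    rw [Finset.sum_comm]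
    exact Finset.sum_congr rfl fun j _ => Finset.sum_congr rfl fun i _ => by ring
  have step2 : ∑ j, b j * d j ≤ ∑ j, (if v' j then (1:ℝ) else 0) * d j := by
    refine Finset.sum_le_sum fun j _ => ?_
    by_cases h : 0 ≤ d j
    · have he : (if v' j then (1:ℝ) else 0) = 1 := by simp [hv', h]
      rw [he]
      nlinarith [hb1 j]
    · have he : (if v' j then (1:ℝ) else 0) = 0 := by simp [hv', h]
      rw [he]
      push_neg at h
      nlinarith [hb0 j]
  have final : ∑ j, (if v' j then (1:ℝ) else 0) * d j
      = frob W (fun i j => (if u' i then (1:ℝ) else 0) * (if v' j then (1:ℝ) else 0)) := by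
    simp only [hd, frob, Finset.mul_sum]
    rw [Finset.sum_comm]
    exact Finset.sum_congr rfl fun i _ => Finset.sum_congr rfl fun j _ => by ring
  have hlast : frob W (fun i j => (if u' i then (1:ℝ) else 0) * (if v' j then (1:ℝ) else 0))
      ≤ Dmax := hub _ ⟨u', v', rfl⟩
  linarith

/-- Rothvoss' hyperplane separation bound: for a nonnegative matrix `S` and any
matrix `W` with a positive entry,
`rank⁺(S) ≥ ⟨W,S⟩ / (‖S‖_∞ · max{⟨W, u vᵀ⟩ : u ∈ {0,1}^l, v ∈ {0,1}^m})`.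
Here `Snorm` is the largest absolute value of an entry of `S`, and `Dmax` is the
largest value of `⟨W, u vᵀ⟩` over boolean vectors `u, v`; `Dmax` is assumed
positive (which holds since `W` has a positive entry). -/
theorem stmt5 {l m : ℕ} (S W : Matrix (Fin l) (Fin m) ℝ)
    (hS : ∀ i j, 0 ≤ S i j) (hW : ∃ i j, 0 < W i j)
    (Snorm : ℝ) (hSnorm : IsGreatest {x : ℝ | ∃ i j, x = |S i j|} Snorm)
    (Dmax : ℝ)
    (hDmax : IsGreatest
      {x : ℝ | ∃ (u : Fin l → Bool) (v : Fin m → Bool),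
        x = frob W (fun i j => (if u i then (1:ℝ) else 0) * (if v j then (1:ℝ) else 0))}
      Dmax)
    (hDpos : 0 < Dmax) :
    frob W S / (Snorm * Dmax) ≤ (nnegRank S : ℝ) := by
  obtain ⟨⟨i0, j0, hS0⟩, hSub⟩ := hSnorm
  have hSnn : 0 ≤ Snorm := hS0 ▸ abs_nonneg _
  -- the defining set is nonempty
  have hne : {r : ℕ | ∃ (u : Fin r → Fin l → ℝ) (v : Fin r → Fin m → ℝ),
      (∀ t i, 0 ≤ u t i) ∧ (∀ t j, 0 ≤ v t j) ∧
      ∀ i j, S i j = ∑ t, u t i * v t j}.Nonempty := by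
    refine ⟨l, fun t i => if t = i then 1 else 0, fun t j => S t j, ?_, ?_, ?_⟩
    · intro t i; dsimp only; split <;> norm_num
    · intro t j; exact hS t j
    · intro i j
      simp [ite_mul]
  have hmem : nnegRank S ∈ {r : ℕ | ∃ (u : Fin r → Fin l → ℝ) (v : Fin r → Fin m → ℝ),
      (∀ t i, 0 ≤ u t i) ∧ (∀ t j, 0 ≤ v t j) ∧
      ∀ i j, S i j = ∑ t, u t i * v t j} := Nat.sInf_mem hne
  obtain ⟨u, v, hu, hv, hsum⟩ := hmem
  -- rewrite frob W S as a sum over t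
  have hfs : frob W S = ∑ t : Fin (nnegRank S), ∑ i, ∑ j, W i j * (u t i * v t j) := by
    symm
    rw [Finset.sum_comm]
    simp only [frob, hsum, Finset.mul_sum]
    exact Finset.sum_congr rfl fun i _ => Finset.sum_comm
  -- per-term bound
  have hterm : ∀ t : Fin (nnegRank S), ∑ i, ∑ j, W i j * (u t i * v t j) ≤ Snorm * Dmax := by
    intro t
    have hIne : (Finset.univ : Finset (Fin l)).Nonempty := ⟨i0, Finset.mem_univ i0⟩
    have hJne : (Finset.univ : Finset (Fin m)).Nonempty := ⟨j0, Finset.mem_univ j0⟩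
    obtain ⟨i1, _, hi1⟩ := Finset.exists_mem_eq_sup' hIne (u t)
    obtain ⟨j1, _, hj1⟩ := Finset.exists_mem_eq_sup' hJne (v t)
    have hαub : ∀ i, u t i ≤ u t i1 := fun i => by
      rw [← hi1]; exact Finset.le_sup' (u t) (Finset.mem_univ i)
    have hβub : ∀ j, v t j ≤ v t j1 := fun j => by
      rw [← hj1]; exact Finset.le_sup' (v t) (Finset.mem_univ j)
    have hα0 : 0 ≤ u t i1 := hu t i1
    have hβ0 : 0 ≤ v t j1 := hv t j1
    by_cases hzero : u t i1 = 0 ∨ v t j1 = 0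
    · have hz : ∑ i, ∑ j, W i j * (u t i * v t j) = 0 := by
        refine Finset.sum_eq_zero fun i _ => Finset.sum_eq_zero fun j _ => ?_
        rcases hzero with h | h
        · have : u t i = 0 := le_antisymm (h ▸ hαub i) (hu t i)
          rw [this]; ring
        · have : v t j = 0 := le_antisymm (h ▸ hβub j) (hv t j)
          rw [this]; ring
      rw [hz]
      exact mul_nonneg hSnn hDpos.le
    · push_neg at hzero
      have hαpos : 0 < u t i1 := lt_of_le_of_ne hα0 (Ne.symm hzero.1)
      have hβpos : 0 < v t j1 := lt_of_le_of_ne hβ0 (Ne.symm hzero.2)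
      have hbox := box_le_bool W Dmax hDmax.2
        (fun i => u t i / u t i1) (fun j => v t j / v t j1)
        (fun i => div_nonneg (hu t i) hα0) (fun i => div_le_one_of_le₀ (hαub i) hα0)
        (fun j => div_nonneg (hv t j) hβ0) (fun j => div_le_one_of_le₀ (hβub j) hβ0)
      have heq : ∑ i, ∑ j, W i j * (u t i * v t j)
          = (u t i1 * v t j1) * ∑ i, ∑ j, W i j * (u t i / u t i1 * (v t j / v t j1)) := by
        rw [Finset.mul_sum]
        refine Finset.sum_congr rfl fun i _ => ?_
        rw [Finset.mul_sum]
        refine Finset.sum_congr rfl fun j _ => ?_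
        field_simp
      have hαβ : u t i1 * v t j1 ≤ Snorm := by
        have h1 : u t i1 * v t j1 ≤ S i1 j1 := by
          rw [hsum i1 j1]
          exact Finset.single_le_sum (f := fun s => u s i1 * v s j1)
            (fun s _ => mul_nonneg (hu s i1) (hv s j1)) (Finset.mem_univ t)
        have h2 : S i1 j1 ≤ Snorm := le_trans (le_abs_self _) (hSub ⟨i1, j1, rfl⟩)
        linarith
      rw [heq]
      calc (u t i1 * v t j1) * ∑ i, ∑ j, W i j * (u t i / u t i1 * (v t j / v t j1))
          ≤ (u t i1 * v t j1) * Dmax :=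
            mul_le_mul_of_nonneg_left hbox (mul_nonneg hα0 hβ0)
        _ ≤ Snorm * Dmax := mul_le_mul_of_nonneg_right hαβ hDpos.le
  have htot : frob W S ≤ (nnegRank S : ℝ) * (Snorm * Dmax) := by
    rw [hfs]
    calc ∑ t : Fin (nnegRank S), ∑ i, ∑ j, W i j * (u t i * v t j)
        ≤ ∑ _t : Fin (nnegRank S), Snorm * Dmax := Finset.sum_le_sum fun t _ => hterm t
      _ = (nnegRank S : ℝ) * (Snorm * Dmax) := by
          simp [Finset.sum_const, Finset.card_univ]
  rcases eq_or_lt_of_le hSnn with h0 | hpos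
  · have hSz : ∀ i j, S i j = 0 := fun i j =>
      abs_eq_zero.mp (le_antisymm (h0 ▸ hSub ⟨i, j, rfl⟩) (abs_nonneg _))
    simp only [frob, hSz, mul_zero, Finset.sum_const_zero]
    rw [zero_div]
    exact_mod_cast Nat.cast_nonneg (nnegRank S)
  · rw [div_le_iff₀ (mul_pos hpos hDpos)]
    linarith
end

section
/- For every α, β > 0 and q ∈ ℕ there is a constant δ = δ(α, β, q) > 0 such that the following holds. Let X₁, …, X_m be finite sets with |X_i| ≤ q, let X = X₁ × ⋯ × X_m, and let Y ⊆ X with |Y| ≥ 2^{−δm}|X|. Call an index i ∈ [m] α-unbiased if for every j ∈ X_i, (1/(1+α))·Pr_{y∈X}[y ∈ Y] ≤ Pr_{y∈X}[y ∈ Y | y_i = j] ≤ (1+α)·Pr_{y∈X}[y ∈ Y]. Then at most βm indices in [m] fail to be α-unbiased. -/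
/-!
Let `p_i` be the law of the `i`-th coordinate of a uniform random point of `Y`. Subadditivity
of entropy gives `log |Y| ≤ ∑ᵢ H(p_i)`, i.e.
`∑ᵢ KL(p_i ‖ unif X_i) ≤ log |X| - log |Y| ≤ δ m log 2`.
The conditional density `Pr[y ∈ Y ∣ y_i = j] / Pr[y ∈ Y]` equals `|X_i| p_i(j)`, and
`KL(p_i ‖ unif X_i) = ∑_j klFun (|X_i| p_i(j)) / |X_i|` with `klFun t = t log t + 1 - t` convex,
nonnegative and vanishing only at `1`. So every biased coordinate contributes at least `ε / q`,
where `ε = min (klFun (1/(1+α))) (klFun (1+α)) > 0`, and at most `q δ m log 2 / ε` coordinates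
are biased.
-/

open Finset Real InformationTheory

lemma klFun_pos {x : ℝ} (hx : 0 ≤ x) (hx1 : x ≠ 1) : 0 < klFun x :=
  (klFun_nonneg hx).lt_of_ne' fun h => hx1 ((klFun_eq_zero_iff hx).mp h)

lemma min_klFun_le_klFun_of_notMem_Icc {a b t : ℝ} (ha : a ≤ 1) (hb : 1 ≤ b) (ht : 0 ≤ t)
    (htab : t ∉ Set.Icc a b) : min (klFun a) (klFun b) ≤ klFun t := by
  rw [Set.mem_Icc, not_and_or, not_le, not_le] at htab
  rcases htab with hta | hbt
  · have h := convexOn_klFun.le_on_segment ht (Set.mem_Ici.mpr zero_le_one)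
      (by rw [segment_eq_Icc (hta.le.trans ha)]; exact ⟨hta.le, ha⟩)
    rw [klFun_one, max_eq_left (klFun_nonneg ht)] at h
    exact (min_le_left _ _).trans h
  · have h := convexOn_klFun.le_on_segment (Set.mem_Ici.mpr zero_le_one) ht
      (by rw [segment_eq_Icc (hb.trans hbt.le)]; exact ⟨hb, hbt.le⟩)
    rw [klFun_one, max_eq_right (klFun_nonneg ht)] at h
    exact (min_le_right _ _).trans h

lemma klFun_mul_div_eq {c p : ℝ} (hc : c ≠ 0) :
    klFun (c * p) / c = p * log c - negMulLog p + 1 / c - p := by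
  rcases eq_or_ne p 0 with rfl | hp
  · simp [klFun_apply]
  · rw [klFun_apply, log_mul hc hp, negMulLog]
    field_simp
    ring

lemma sum_klFun_div_card_eq_log_card_sub_sum_negMulLog {J : Type*} [Fintype J] {p : J → ℝ}
    (hp : ∑ j, p j = 1) :
    ∑ j, klFun (Fintype.card J * p j) / Fintype.card J
      = log (Fintype.card J) - ∑ j, negMulLog (p j) := by
  have : Nonempty J := by
    by_contra h
    simp [not_nonempty_iff.mp h] at hp
  have hc : (Fintype.card J : ℝ) ≠ 0 := by positivity
  simp only [klFun_mul_div_eq hc, sum_add_distrib, sum_sub_distrib, ← sum_mul, hp, sum_const,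
    card_univ, nsmul_eq_mul]
  field_simp
  ring

lemma card_filter_apply_eq_mul_card {ι : Type*} [Fintype ι] [DecidableEq ι] {X : ι → Type*}
    [∀ i, Fintype (X i)] [∀ i, DecidableEq (X i)] (i : ι) (j : X i) :
    #{y : ∀ i, X i | y i = j} * Fintype.card (X i) = Fintype.card (∀ i, X i) := by
  rw [← Fintype.piFinset_univ,
    Fintype.card_filter_piFinset_eq_of_mem (fun k => (univ : Finset (X k))) i (mem_univ j),
    Fintype.card_pi]
  exact prod_erase_mul univ (fun k => #(univ : Finset (X k))) (mem_univ i)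

section Marginal

variable {ι : Type*} {X : ι → Type*} [∀ i, DecidableEq (X i)]

noncomputable def marginal (Y : Finset (∀ i, X i)) (i : ι) (j : X i) : ℝ :=
  (#{y ∈ Y | y i = j} : ℝ) / #Y

variable {Y : Finset (∀ i, X i)}

lemma marginal_nonneg (i : ι) (j : X i) : 0 ≤ marginal Y i j := by
  unfold marginal; positivity

lemma marginal_pos {y : ∀ i, X i} (hy : y ∈ Y) (i : ι) : 0 < marginal Y i (y i) :=
  div_pos (Nat.cast_pos.mpr (card_pos.mpr ⟨y, mem_filter.mpr ⟨hy, rfl⟩⟩))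
    (Nat.cast_pos.mpr (card_pos.mpr ⟨y, hy⟩))

lemma card_mul_marginal (hY : Y.Nonempty) (i : ι) (j : X i) :
    #Y * marginal Y i j = #{y ∈ Y | y i = j} :=
  mul_div_cancel₀ _ (Nat.cast_ne_zero.mpr hY.card_ne_zero)

variable [∀ i, Fintype (X i)]

lemma sum_log_marginal (hY : Y.Nonempty) (i : ι) :
    ∑ y ∈ Y, log (marginal Y i (y i)) = #Y * ∑ j, marginal Y i j * log (marginal Y i j) := by
  rw [← sum_fiberwise Y (fun y : ∀ i, X i => y i), mul_sum]
  refine sum_congr rfl fun j _ => ?_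
  rw [sum_congr rfl fun y hy => by rw [(mem_filter.mp hy).2], sum_const, nsmul_eq_mul,
    ← mul_assoc, card_mul_marginal hY]

lemma sum_marginal (hY : Y.Nonempty) (i : ι) : ∑ j, marginal Y i j = 1 := by
  have hN : (#Y : ℝ) ≠ 0 := Nat.cast_ne_zero.mpr hY.card_ne_zero
  rw [← mul_right_inj' hN, mul_sum, mul_one]
  simp only [card_mul_marginal hY]
  exact_mod_cast (card_eq_sum_card_fiberwise fun (y : ∀ i, X i) _ => mem_univ (y i)).symm

variable [Fintype ι]

/-- Subadditivity of entropy for the uniform distribution on `Y`. -/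
lemma log_card_le_sum_negMulLog_marginal (hY : Y.Nonempty) :
    log #Y ≤ ∑ i, ∑ j, negMulLog (marginal Y i j) := by
  classical
  set N : ℝ := (#Y : ℝ)
  have hN : 0 < N := Nat.cast_pos.mpr hY.card_pos
  set Q : (∀ i, X i) → ℝ := fun y => ∏ i, marginal Y i (y i)
  have hQ : ∀ y ∈ Y, 0 < Q y := fun y hy => prod_pos fun i _ => marginal_pos hy i
  -- Gibbs' inequality between the uniform distribution on `Y` and the product of its marginals
  have gibbs : ∑ y ∈ Y, log (N * Q y) ≤ 0 := calc
    ∑ y ∈ Y, log (N * Q y) ≤ ∑ y ∈ Y, (N * Q y - 1) :=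
      sum_le_sum fun y hy => log_le_sub_one_of_pos (mul_pos hN (hQ y hy))
    _ = N * (∑ y ∈ Y, Q y - 1) := by
      rw [sum_sub_distrib, ← mul_sum, sum_const, nsmul_one]; ring
    _ ≤ N * (∑ y, Q y - 1) :=
      mul_le_mul_of_nonneg_left (sub_le_sub_right (sum_le_sum_of_subset_of_nonneg
        (subset_univ Y) fun y _ _ => prod_nonneg fun i _ => marginal_nonneg i (y i)) 1) hN.le
    _ = 0 := by
      simp only [Q, ← Fintype.prod_sum, sum_marginal hY, prod_const_one, sub_self, mul_zero]
  have hsplit : ∑ y ∈ Y, log (N * Q y)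
      = N * (log N + ∑ i, ∑ j, marginal Y i j * log (marginal Y i j)) := by
    rw [sum_congr rfl fun y hy => by
        rw [log_mul hN.ne' (hQ y hy).ne', log_prod fun i _ => (marginal_pos hy i).ne'],
      sum_add_distrib, sum_comm]
    simp only [sum_log_marginal hY, sum_const, nsmul_eq_mul, ← mul_sum, mul_add, N]
  have := nonpos_of_mul_nonpos_right (hsplit ▸ gibbs) hN
  simp only [negMulLog, neg_mul, sum_neg_distrib]
  linarith

variable [DecidableEq ι]

lemma sum_sum_klFun_marginal_le (hY : Y.Nonempty) :
    ∑ i, ∑ j, klFun (Fintype.card (X i) * marginal Y i j) / Fintype.card (X i)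
      ≤ log (Fintype.card (∀ i, X i)) - log #Y := by
  obtain ⟨y, -⟩ := id hY
  have hc : ∀ i, (Fintype.card (X i) : ℝ) ≠ 0 :=
    fun i => Nat.cast_ne_zero.mpr (Fintype.card_pos_iff.mpr ⟨y i⟩).ne'
  simp only [sum_klFun_div_card_eq_log_card_sub_sum_negMulLog (sum_marginal hY _),
    sum_sub_distrib, Fintype.card_pi, Nat.cast_prod, log_prod fun i _ => hc i]
  linarith [log_card_le_sum_negMulLog_marginal hY]

lemma card_filter_div_card_filter_eq (hY : Y.Nonempty) (i : ι) (j : X i) :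
    (#{y ∈ Y | y i = j} : ℝ) / #{y : ∀ i, X i | y i = j}
      = Fintype.card (X i) * marginal Y i j * (#Y / Fintype.card (∀ i, X i)) := by
  obtain ⟨y, -⟩ := id hY
  have hc : (Fintype.card (X i) : ℝ) ≠ 0 :=
    Nat.cast_ne_zero.mpr (Fintype.card_pos_iff.mpr ⟨y i⟩).ne'
  have hF : (#{y : ∀ i, X i | y i = j} : ℝ) ≠ 0 :=
    Nat.cast_ne_zero.mpr (card_ne_zero.mpr ⟨Function.update y i j, by simp⟩)
  rw [← card_mul_marginal hY, ← card_filter_apply_eq_mul_card i j]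
  push_cast
  field_simp

lemma ncard_mul_le_mul_log_card_sub_log_card (hY : Y.Nonempty) {q : ℕ}
    (hq : ∀ i, Fintype.card (X i) ≤ q) {ε : ℝ} {S : Set ι}
    (hS : ∀ i ∈ S, ∃ j, ε ≤ klFun (Fintype.card (X i) * marginal Y i j)) :
    S.ncard * ε ≤ q * (log (Fintype.card (∀ i, X i)) - log #Y) := by
  classical
  obtain ⟨y, -⟩ := id hY
  have hc : ∀ i, (0 : ℝ) < Fintype.card (X i) :=
    fun i => Nat.cast_pos.mpr (Fintype.card_pos_iff.mpr ⟨y i⟩)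
  set d : ∀ i, X i → ℝ :=
    fun i j => klFun (Fintype.card (X i) * marginal Y i j) / Fintype.card (X i)
  have hd : ∀ i j, 0 ≤ d i j := fun i j =>
    div_nonneg (klFun_nonneg (mul_nonneg (hc i).le (marginal_nonneg i j))) (hc i).le
  have hdS : ∀ i ∈ S, ε ≤ q * ∑ j, d i j := by
    rintro i hi
    obtain ⟨j, hj⟩ := hS i hi
    calc ε ≤ Fintype.card (X i) * d i j := by rwa [mul_div_cancel₀ _ (hc i).ne']
      _ ≤ q * ∑ j, d i j :=
          mul_le_mul (Nat.cast_le.mpr (hq i)) (single_le_sum (fun j _ => hd i j) (mem_univ j))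
            (hd i j) (Nat.cast_nonneg q)
  rw [Set.ncard_eq_toFinset_card', ← nsmul_eq_mul, ← sum_const]
  calc ∑ _i ∈ S.toFinset, ε ≤ ∑ i ∈ S.toFinset, q * ∑ j, d i j :=
        sum_le_sum fun i hi => hdS i (Set.mem_toFinset.mp hi)
    _ ≤ ∑ i, q * ∑ j, d i j :=
        sum_le_sum_of_subset_of_nonneg (subset_univ _) fun i _ _ =>
          mul_nonneg (Nat.cast_nonneg q) (sum_nonneg fun j _ => hd i j)
    _ ≤ q * (log (Fintype.card (∀ i, X i)) - log #Y) := by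
        rw [← mul_sum]
        exact mul_le_mul_of_nonneg_left (sum_sum_klFun_marginal_le hY) (Nat.cast_nonneg _)

end Marginal

/-- Razborov-style unbiasedness lemma (as used by Rothvoss): for every
`α, β > 0` and `q` there is `δ > 0` such that for any product `X = X₁ × ⋯ × X_m`
of nonempty sets of size at most `q` and any `Y ⊆ X` with
`|Y| ≥ 2^{-δm}|X|`, at most `βm` coordinates `i` are `α`-biased, i.e. fail
`(1/(1+α))·Pr[y∈Y] ≤ Pr[y∈Y ∣ y_i = j] ≤ (1+α)·Pr[y∈Y]` for some `j ∈ X_i`. -/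
theorem stmt8 (α β : ℝ) (hα : 0 < α) (hβ : 0 < β) (q : ℕ) :
    ∃ δ : ℝ, 0 < δ ∧
      ∀ (m : ℕ) (X : Fin m → Type) [∀ i, Fintype (X i)] [∀ i, DecidableEq (X i)]
        [∀ i, Nonempty (X i)],
        (∀ i, Fintype.card (X i) ≤ q) →
        ∀ Y : Finset (∀ i, X i),
          (2 : ℝ) ^ (-(δ * m)) * Fintype.card (∀ i, X i) ≤ Y.card →
          ({i : Fin m |
              ¬ ∀ j : X i,
                (1 / (1 + α)) * ((Y.card : ℝ) / Fintype.card (∀ i, X i)) ≤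
                    ((Y.filter (fun y => y i = j)).card : ℝ) /
                      ((Finset.univ.filter (fun y : ∀ i, X i => y i = j)).card) ∧
                  ((Y.filter (fun y => y i = j)).card : ℝ) /
                      ((Finset.univ.filter (fun y : ∀ i, X i => y i = j)).card) ≤
                    (1 + α) * ((Y.card : ℝ) / Fintype.card (∀ i, X i))}.ncard : ℝ)
            ≤ β * m := by
  set ε := min (klFun (1 / (1 + α))) (klFun (1 + α))
  have hα' : 1 / (1 + α) < 1 := by rw [div_lt_one (by linarith)]; linarith
  have hε : 0 < ε :=
    lt_min (klFun_pos (by positivity) hα'.ne) (klFun_pos (by positivity) (by linarith))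
  set δ := β * ε / ((q + 1) * log 2) with hδ
  refine ⟨δ, by positivity, fun m X _ _ _ hq Y hY => ?_⟩
  have hC : (0 : ℝ) < Fintype.card (∀ i, X i) := Nat.cast_pos.mpr Fintype.card_pos
  have hN : (0 : ℝ) < #Y := (by positivity : (0 : ℝ) < _).trans_le hY
  have hlog : log (Fintype.card (∀ i, X i)) - log #Y ≤ δ * m * log 2 := by
    have h := log_le_log (by positivity) hY
    rw [log_mul (by positivity) hC.ne', log_rpow two_pos] at h
    linarith
  have hYne : Y.Nonempty := card_pos.mp (Nat.cast_pos.mp hN)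
  simp only [card_filter_div_card_filter_eq hYne, mul_le_mul_iff_left₀ (div_pos hN hC)]
  refine le_of_mul_le_mul_right ?_ hε
  calc _ ≤ q * (log (Fintype.card (∀ i, X i)) - log #Y) :=
        ncard_mul_le_mul_log_card_sub_log_card hYne hq fun i hi => ?_
    _ ≤ q * (δ * m * log 2) := by gcongr
    _ = β * m * ε * (q / (q + 1)) := by rw [hδ]; field_simp
    _ ≤ β * m * ε :=
        mul_le_of_le_one_right (by positivity) (div_le_one_of_le₀ (by linarith) (by positivity))
  obtain ⟨j, hj⟩ := not_forall.mp hi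
  exact ⟨j, min_klFun_le_klFun_of_notMem_Icc hα'.le (by linarith)
    (mul_nonneg (Nat.cast_nonneg _) (marginal_nonneg i j)) hj⟩
end

section
/- Let G = (U, V, E) be a complete bipartite multigraph with |U| = |V| (each pair u ∈ U, v ∈ V joined by both a red and a blue edge), and let L₁, L₂ : U ∪ V → {0,1} be two labelings. Suppose ||{u ∈ U : L₁(u) = L₂(u)}| − |{v ∈ V : L₁(v) = L₂(v)}|| = t. Then there exists a perfect matching M of G such that every edge of M is consistent with L₁ and exactly t edges of M violate L₂. -/
/-!
Colour the matched edge `(u, π u)` red exactly when `L₁ u = L₁ (π u)`; this makes every edge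
consistent with `L₁`, and the edge then violates `L₂` exactly when one of `u ∈ A`, `π u ∈ B`
holds and the other fails, where `A ⊆ U` and `B ⊆ V` are the sets on which `L₁` and `L₂` agree.
A permutation sending the smaller of `A`, `B` into the larger one (extended arbitrarily outside)
has exactly `||A| - |B||` such mismatches.
-/

open Finset

section PermMismatch

variable {α : Type*} [Fintype α] [DecidableEq α]

theorem exists_perm_card_filter_not_iff_eq_tsub {S T : Finset α} (h : #S ≤ #T) :
    ∃ π : Equiv.Perm α, #{u | ¬(u ∈ S ↔ π u ∈ T)} = #T - #S := by
  obtain ⟨T', hT'T, hT'⟩ := exists_subset_card_eq h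
  set π := (Fintype.equivOfCardEq (α := S) (β := T') (by simp [hT'])).extendSubtype
  have hπ (u : α) : u ∈ S ↔ π u ∈ T' :=
    ⟨Equiv.extendSubtype_mem _ u, not_imp_not.mp (Equiv.extendSubtype_not_mem _ u)⟩
  refine ⟨π, ?_⟩
  rw [← hT', ← card_sdiff_of_subset hT'T]
  refine card_equiv π fun u => ?_
  simp only [mem_filter, mem_univ, true_and, mem_sdiff, hπ u]
  have := @hT'T (π u)
  tauto

theorem exists_perm_card_filter_not_iff_eq_natAbs (S T : Finset α) :
    ∃ π : Equiv.Perm α, #{u | ¬(u ∈ S ↔ π u ∈ T)} = ((#S : ℤ) - #T).natAbs := by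
  rcases le_total #S #T with h | h
  · obtain ⟨π, hπ⟩ := exists_perm_card_filter_not_iff_eq_tsub h
    exact ⟨π, by omega⟩
  · obtain ⟨π, hπ⟩ := exists_perm_card_filter_not_iff_eq_tsub h
    refine ⟨π.symm, ?_⟩
    have hsymm : #{v | ¬(v ∈ T ↔ π v ∈ S)} = #{u | ¬(u ∈ S ↔ π.symm u ∈ T)} :=
      card_equiv π fun v => by
        simp only [mem_filter, mem_univ, true_and, Equiv.symm_apply_apply]
        tauto
    omega

end PermMismatch

/-- A perfect matching is a permutation `π` with a colour choice `c`, where `c u = true` means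
the red copy of the edge `(u, π u)` is used. -/
theorem stmt9 (n : ℕ) (L1U L1V L2U L2V : Fin n → Bool) (t : ℕ)
    (ht : ((Finset.univ.filter (fun u => L1U u = L2U u)).card -
            (Finset.univ.filter (fun v => L1V v = L2V v)).card : ℤ).natAbs = t) :
    ∃ (π : Equiv.Perm (Fin n)) (c : Fin n → Bool),
      (∀ u, (c u = true ∧ L1U u = L1V (π u)) ∨ (c u = false ∧ L1U u ≠ L1V (π u))) ∧
      (Finset.univ.filter (fun u =>
        (c u = false ∧ L2U u = L2V (π u)) ∨ (c u = true ∧ L2U u ≠ L2V (π u)))).card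
        = t := by
  obtain ⟨π, hπ⟩ := exists_perm_card_filter_not_iff_eq_natAbs
    {u | L1U u = L2U u} {v | L1V v = L2V v}
  refine ⟨π, fun u => L1U u == L1V (π u), fun u => ?_, ?_⟩
  · cases h : L1U u == L1V (π u) <;> simp_all
  · rw [← ht, ← hπ]
    congr 1
    refine filter_congr fun u _ => ?_
    simp only [mem_filter, mem_univ, true_and]
    cases L1U u <;> cases L2U u <;> cases L1V (π u) <;> cases L2V (π u) <;> decide
end

section
/- Let G = (U, V, E) be a bipartite graph with a perfect matching M. Direct every edge of M from U to V and every other edge from V to U. Consider the subgraph H induced by the 'relevant' edges, i.e., edges that belong to some perfect matching of G. Then every connected component of H that is not a single edge is strongly connected as a directed graph. -/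
/-!
Write `σ` and `σ'` for the partner permutations `U → V` of the perfect matchings `M` and `M'`.
The permutation `ρ = σ ∘ σ'⁻¹` of `V` encodes the alternating cycles of `M △ M'`: whenever
`ρ v ≠ v`, the oriented path `v → σ'⁻¹ v → ρ v` uses an `M'`-edge outside `M` and an `M`-edge,
so every vertex of `V` reaches its whole `ρ`-cycle. Hence every relevant edge can be traversed
backwards, unless it is an `M`-edge lying in every perfect matching; such an edge meets no other
relevant edge, so it forms a component on its own.
-/

/-- A perfect matching of the bipartite graph with edge set `E ⊆ Fin n × Fin n`. -/
def IsPM {n : ℕ} (E M : Finset (Fin n × Fin n)) : Prop :=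
  M ⊆ E ∧
  (∀ u : Fin n, (M.filter (fun e => e.1 = u)).card = 1) ∧
  (∀ v : Fin n, (M.filter (fun e => e.2 = v)).card = 1)

/-- An edge is relevant if it lies in some perfect matching. -/
def Relevant {n : ℕ} (E : Finset (Fin n × Fin n)) (e : Fin n × Fin n) : Prop :=
  ∃ M', IsPM E M' ∧ e ∈ M'

/-- One step of the orientation induced by the perfect matching `M` on the
subgraph of relevant edges: matching edges are directed `U → V` and the other
relevant edges `V → U`. -/
def Step {n : ℕ} (E M : Finset (Fin n × Fin n)) :
    (Fin n ⊕ Fin n) → (Fin n ⊕ Fin n) → Prop := fun x y =>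
  ∃ u v : Fin n, Relevant E (u, v) ∧
    (((u, v) ∈ M ∧ x = Sum.inl u ∧ y = Sum.inr v) ∨
     ((u, v) ∈ E ∧ (u, v) ∉ M ∧ x = Sum.inr v ∧ y = Sum.inl u))

open Relation Equiv

namespace Equiv.Perm

variable {α : Type*} {f : Perm α} {r : α → α → Prop} {x y : α}

theorem reflTransGen_pow_apply (hr : ∀ y, f y ≠ y → r y (f y)) (i : ℕ) :
    ReflTransGen r x ((f ^ i) x) := by
  induction i with
  | zero => rfl
  | succ i ih =>
    rw [pow_succ', mul_apply]
    by_cases hfix : f ((f ^ i) x) = (f ^ i) x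
    · rwa [hfix]
    · exact ih.tail (hr _ hfix)

theorem SameCycle.reflTransGen [Finite α] (hr : ∀ y, f y ≠ y → r y (f y))
    (h : SameCycle f x y) : ReflTransGen r x y := by
  obtain ⟨i, rfl⟩ := h.exists_nat_pow_eq
  exact reflTransGen_pow_apply hr i

end Equiv.Perm

variable {n : ℕ} {E M M' : Finset (Fin n × Fin n)} {u v : Fin n}

namespace IsPM

theorem existsUnique_snd (hM : IsPM E M) (u : Fin n) : ∃! v, (u, v) ∈ M := by
  obtain ⟨e, he, huniq⟩ := Finset.card_eq_one_iff_existsUnique.1 (hM.2.1 u)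
  obtain ⟨heM, rfl⟩ := Finset.mem_filter.1 he
  exact ⟨e.2, heM, fun v hv => congrArg Prod.snd (huniq _ (Finset.mem_filter.2 ⟨hv, rfl⟩))⟩

theorem existsUnique_fst (hM : IsPM E M) (v : Fin n) : ∃! u, (u, v) ∈ M := by
  obtain ⟨e, he, huniq⟩ := Finset.card_eq_one_iff_existsUnique.1 (hM.2.2 v)
  obtain ⟨heM, rfl⟩ := Finset.mem_filter.1 he
  exact ⟨e.1, heM, fun u hu => congrArg Prod.fst (huniq _ (Finset.mem_filter.2 ⟨hu, rfl⟩))⟩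

noncomputable def mate (hM : IsPM E M) : Perm (Fin n) where
  toFun u := (hM.existsUnique_snd u).exists.choose
  invFun v := (hM.existsUnique_fst v).exists.choose
  left_inv u := (hM.existsUnique_fst _).unique
    (hM.existsUnique_fst _).exists.choose_spec (hM.existsUnique_snd u).exists.choose_spec
  right_inv v := (hM.existsUnique_snd _).unique
    (hM.existsUnique_snd _).exists.choose_spec (hM.existsUnique_fst v).exists.choose_spec

theorem mate_mem (hM : IsPM E M) (u : Fin n) : (u, hM.mate u) ∈ M :=
  (hM.existsUnique_snd u).exists.choose_spec

theorem mem_iff_mate_eq (hM : IsPM E M) : (u, v) ∈ M ↔ hM.mate u = v :=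
  ⟨fun h => (hM.existsUnique_snd u).unique (hM.mate_mem u) h, fun h => h ▸ hM.mate_mem u⟩

end IsPM

theorem step_inl_inr (hM : IsPM E M) (h : (u, v) ∈ M) : Step E M (Sum.inl u) (Sum.inr v) :=
  ⟨u, v, ⟨M, hM, h⟩, Or.inl ⟨h, rfl, rfl⟩⟩

theorem step_inr_inl (hM' : IsPM E M') (h : (u, v) ∈ M') (hnot : (u, v) ∉ M) :
    Step E M (Sum.inr v) (Sum.inl u) :=
  ⟨u, v, ⟨M', hM', h⟩, Or.inr ⟨hM'.1 h, hnot, rfl, rfl⟩⟩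

theorem reflTransGen_step_inr_mate (hM : IsPM E M) (hM' : IsPM E M') (h : (u, v) ∈ M') :
    ReflTransGen (Step E M) (Sum.inr (hM.mate u)) (Sum.inr v) := by
  set ρ := hM.mate * hM'.mate⁻¹
  have hρ : ∀ w, ρ w ≠ w → ReflTransGen (Step E M) (Sum.inr w) (Sum.inr (ρ w)) := by
    intro w hw
    have hmem' : (hM'.mate⁻¹ w, w) ∈ M' := hM'.mem_iff_mate_eq.2 (Perm.eq_inv_iff_eq.1 rfl)
    have hnotM : (hM'.mate⁻¹ w, w) ∉ M := fun hmem => hw (hM.mem_iff_mate_eq.1 hmem)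
    exact .tail (.single (step_inr_inl hM' hmem' hnotM)) (step_inl_inr hM (hM.mate_mem _))
  have hcycle : ρ.SameCycle (hM.mate u) v := by
    have hv : ρ v = hM.mate u := by
      simp [ρ, Perm.mul_apply, Perm.inv_eq_iff_eq.2 (hM'.mem_iff_mate_eq.1 h).symm]
    exact hv ▸ Perm.sameCycle_apply_left.2 (Perm.SameCycle.refl _ _)
  exact ReflTransGen.lift' Sum.inr (fun _ _ h => h) _ _ (hcycle.reflTransGen hρ)

theorem reflTransGen_step_inl_inr (hM : IsPM E M) (hM' : IsPM E M') (h : (u, v) ∈ M') :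
    ReflTransGen (Step E M) (Sum.inl u) (Sum.inr v) :=
  .head (step_inl_inr hM (hM.mate_mem u)) (reflTransGen_step_inr_mate hM hM' h)

theorem reflTransGen_step_inr_inl (hM : IsPM E M) (hM' : IsPM E M') (h : (u, v) ∈ M)
    (hnot : (u, v) ∉ M') : ReflTransGen (Step E M) (Sum.inr v) (Sum.inl u) := by
  have hv : hM.mate u = v := hM.mem_iff_mate_eq.1 h
  have hw : (u, hM'.mate u) ∉ M := fun hmem =>
    hnot (hv ▸ hM.mem_iff_mate_eq.1 hmem ▸ hM'.mate_mem u)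
  have hpath := hv ▸ reflTransGen_step_inr_mate hM hM' (hM'.mate_mem u)
  exact hpath.tail (step_inr_inl hM' (hM'.mate_mem u) hw)

def Mandatory (E : Finset (Fin n × Fin n)) (e : Fin n × Fin n) : Prop :=
  ∀ M', IsPM E M' → e ∈ M'

theorem Step.reflTransGen_swap_or_mandatory (hM : IsPM E M) {a b : Fin n ⊕ Fin n}
    (h : Step E M a b) : ReflTransGen (Step E M) b a ∨
      ∃ u v, Mandatory E (u, v) ∧ a = Sum.inl u ∧ b = Sum.inr v := by
  obtain ⟨u, v, ⟨M', hM', h'⟩, ⟨hmem, rfl, rfl⟩ | ⟨-, -, rfl, rfl⟩⟩ := h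
  · by_cases hman : Mandatory E (u, v)
    · exact .inr ⟨u, v, hman, rfl, rfl⟩
    · simp only [Mandatory, not_forall] at hman
      obtain ⟨M'', hM'', hnot⟩ := hman
      exact .inl (reflTransGen_step_inr_inl hM hM'' hmem hnot)
  · exact .inl (reflTransGen_step_inl_inr hM hM' h')

theorem Mandatory.fst_eq_iff_snd_eq (hman : Mandatory E (u, v)) {u' v' : Fin n}
    (h : Relevant E (u', v')) : u' = u ↔ v' = v := by
  obtain ⟨M', hM', hmem⟩ := h
  rw [hM'.mem_iff_mate_eq] at hmem
  rw [← hmem, ← hM'.mem_iff_mate_eq.1 (hman M' hM')]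
  exact hM'.mate.injective.eq_iff.symm

theorem Mandatory.step_closed (hman : Mandatory E (u, v)) {a b : Fin n ⊕ Fin n}
    (h : Step E M a b) : (a = Sum.inl u ∨ a = Sum.inr v ↔ b = Sum.inl u ∨ b = Sum.inr v) := by
  obtain ⟨u', v', hrel, ⟨-, rfl, rfl⟩ | ⟨-, -, rfl, rfl⟩⟩ := h <;>
    simp [hman.fst_eq_iff_snd_eq hrel]

theorem Mandatory.eq_of_reflTransGen (hman : Mandatory E (u, v)) {z : Fin n ⊕ Fin n}
    (h : ReflTransGen (SymmGen (Step E M)) (Sum.inr v) z) : z = Sum.inl u ∨ z = Sum.inr v := by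
  induction h with
  | refl => exact .inr rfl
  | tail _ hpq ih =>
    rcases hpq with hpq | hqp
    · exact (hman.step_closed hpq).1 ih
    · exact (hman.step_closed hqp).2 ih

/-- Every connected component of the directed subgraph of relevant edges that is
not a single edge (i.e. is not contained in two vertices) is strongly
connected: weak connectivity implies directed reachability. -/
theorem stmt11 {n : ℕ} (E M : Finset (Fin n × Fin n)) (hM : IsPM E M)
    (x y : Fin n ⊕ Fin n)
    (hconn : Relation.ReflTransGen (fun a b => Step E M a b ∨ Step E M b a) x y)
    (hbig : ¬ ∃ a b : Fin n ⊕ Fin n,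
      ∀ z, Relation.ReflTransGen (fun a b => Step E M a b ∨ Step E M b a) x z →
        z = a ∨ z = b) :
    Relation.ReflTransGen (Step E M) x y := by
  induction hconn with
  | refl => rfl
  | @tail b c hxb hbc ih =>
    refine ih.trans ?_
    obtain hbc | hcb := hbc
    · exact .single hbc
    obtain hbc | ⟨u, v, hman, rfl, rfl⟩ := hcb.reflTransGen_swap_or_mandatory hM
    · exact hbc
    have hbx : ReflTransGen (SymmGen (Step E M)) (Sum.inr v) x := symm hxb
    exact absurd ⟨_, _, fun z hz => hman.eq_of_reflTransGen (hbx.trans hz)⟩ hbig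
end
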